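/- arXiv:1102.1413 — 3 statements merged into one kernel-verified Lean document; each statement's English description precedes it below -/
import Mathlib

section
/- Let f ∈ C_c^∞(ℝ³) with support contained in the open ball of radius R centered at the origin, let u be the Kirchhoff solution u(y,t) = ∂/∂t [ t · ⨍_{∂B(y,t)} f dσ ], and let y ∈ ℝ³ with |y| ≥ R. Then for every λ ∈ ℝ, ∫_0^∞ u(y,t) e^{iλt} dt = −iλ ∫_{ℝ³} f(x) · e^{iλ|y−x|}/(4π|y−x|) dx. (Both integrals converge absolutely: u(y,·) is continuous and compactly supported in (0,∞), and the right-hand integrand is bounded on the support of f.) -/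
open MeasureTheory Real Set

noncomputable section

/-- Integral of `f` over the sphere of radius `t` centered at `y` in `ℝ³`, with respect
to the 2-dimensional surface measure (expressed via the surface measure
`volume.toSphere` on the unit sphere, scaled by `t²`). -/
def sphereSurfIntegral (f : EuclideanSpace ℝ (Fin 3) → ℝ)
    (y : EuclideanSpace ℝ (Fin 3)) (t : ℝ) : ℝ :=
  t ^ 2 * ∫ z : Metric.sphere (0 : EuclideanSpace ℝ (Fin 3)) 1,
    f (y + t • (z : EuclideanSpace ℝ (Fin 3)))
      ∂((volume : Measure (EuclideanSpace ℝ (Fin 3))).toSphere)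

/-- The average `⨍_{∂B(y,t)} f dσ = (1/(4πt²)) ∫_{∂B(y,t)} f dσ` of `f` over the sphere
of radius `t` centered at `y`. -/
def sphereAvg (f : EuclideanSpace ℝ (Fin 3) → ℝ)
    (y : EuclideanSpace ℝ (Fin 3)) (t : ℝ) : ℝ :=
  (4 * π * t ^ 2)⁻¹ * sphereSurfIntegral f y t

/-- The Kirchhoff solution `u(y,t) = ∂/∂t [ t · ⨍_{∂B(y,t)} f dσ ]` of the 3D wave
equation with initial data `(f, 0)`. -/
def kirchhoff (f : EuclideanSpace ℝ (Fin 3) → ℝ)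
    (y : EuclideanSpace ℝ (Fin 3)) (t : ℝ) : ℝ :=
  deriv (fun τ : ℝ => τ * sphereAvg f y τ) t

namespace KirchhoffAux

open Metric

abbrev E3 := EuclideanSpace ℝ (Fin 3)

/-- Generalized polar coordinates in `ℝ³` for integrable functions. -/
lemma polar_integral (G : E3 → ℂ) (hG : Integrable G) :
    (∫ x, G x) =
      ∫ t in Ioi (0 : ℝ), (t ^ 2 : ℝ) •
        ∫ z : sphere (0 : E3) 1, G (t • (z : E3))
          ∂((volume : Measure E3).toSphere) := by
  have h0 : MeasurableSet ({0}ᶜ : Set E3) := (measurableSet_singleton 0).compl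
  have mp := (volume : Measure E3).measurePreserving_homeomorphUnitSphereProd
  set e := homeomorphUnitSphereProd E3 with he
  set F : sphere (0 : E3) 1 × Ioi (0 : ℝ) → ℂ :=
    fun p => G ((p.2 : ℝ) • (p.1 : E3)) with hF
  have hcomp : ∀ x : ({0}ᶜ : Set E3), F (e x) = G x := by
    intro x
    have hx : (x : E3) ≠ 0 := x.2
    simp only [hF, he, homeomorphUnitSphereProd_apply_snd_coe,
      homeomorphUnitSphereProd_apply_fst_coe]
    rw [smul_inv_smul₀ (norm_ne_zero_iff.mpr hx)]
  have hFe : (F ∘ e) = fun x : ({0}ᶜ : Set E3) => G x := funext fun x => hcomp x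
  have key : Integrable (fun x : ({0}ᶜ : Set E3) => G x)
      ((volume : Measure E3).comap Subtype.val) := by
    have h : (fun x : ({0}ᶜ : Set E3) => G x) = G ∘ Subtype.val := rfl
    rw [h, ← (MeasurableEmbedding.subtype_coe h0).integrable_map_iff,
      map_comap_subtype_coe h0]
    exact hG.restrict
  have hFi : Integrable F (((volume : Measure E3).toSphere).prod
      (Measure.volumeIoiPow (Module.finrank ℝ E3 - 1))) := by
    rw [← mp.integrable_comp_emb e.measurableEmbedding, hFe]
    exact key
  have step1 : (∫ x, G x) =
      ∫ x : ({0}ᶜ : Set E3), G x ∂((volume : Measure E3).comap Subtype.val) := by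
    rw [integral_subtype_comap h0, restrict_compl_singleton]
  have step2 : (∫ x : ({0}ᶜ : Set E3), G x ∂((volume : Measure E3).comap Subtype.val))
      = ∫ p, F p ∂(((volume : Measure E3).toSphere).prod
          (Measure.volumeIoiPow (Module.finrank ℝ E3 - 1))) := by
    rw [← hFe]
    exact mp.integral_comp e.measurableEmbedding F
  have step3 := integral_prod_symm F hFi
  rw [step1, step2, step3]
  have hdim : Module.finrank ℝ E3 - 1 = 2 := by
    simp [finrank_euclideanSpace_fin]
  rw [hdim]
  simp only [Measure.volumeIoiPow, ENNReal.ofReal]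
  rw [integral_withDensity_eq_integral_smul
    ((measurable_subtype_coe.pow_const _).real_toNNReal)]
  rw [integral_subtype_comap measurableSet_Ioi
    (fun t : ℝ => (t ^ 2).toNNReal • ∫ z : sphere (0 : E3) 1, G (t • (z : E3))
      ∂((volume : Measure E3).toSphere))]
  refine setIntegral_congr_fun measurableSet_Ioi fun t ht => ?_
  rw [NNReal.smul_def, Real.coe_toNNReal _ (pow_nonneg ht.out.le _)]

end KirchhoffAux

/-- **Temporal Fourier transform of the measured data.**  If `f ∈ C_c^∞(ℝ³)` is
supported in the open ball of radius `R` and `|y| ≥ R`, then for every `λ ∈ ℝ`,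
`∫_0^∞ u(y,t) e^{iλt} dt = −iλ ∫_{ℝ³} f(x) e^{iλ|y−x|}/(4π|y−x|) dx`,
where `u` is the Kirchhoff solution with initial data `(f, 0)`. -/
theorem kirchhoff_fourier_data
    (R : ℝ) (f : EuclideanSpace ℝ (Fin 3) → ℝ)
    (hf_smooth : ContDiff ℝ (⊤ : ℕ∞) f) (hf_supp : HasCompactSupport f)
    (hf_ball : tsupport f ⊆ Metric.ball (0 : EuclideanSpace ℝ (Fin 3)) R)
    (y : EuclideanSpace ℝ (Fin 3)) (hy : R ≤ ‖y‖) :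
    ∀ lam : ℝ,
      (∫ t in Ioi (0 : ℝ), (kirchhoff f y t : ℂ) * Complex.exp (Complex.I * lam * t)) =
      (-Complex.I * lam) *
        ∫ x : EuclideanSpace ℝ (Fin 3),
          (f x : ℂ) * (Complex.exp (Complex.I * lam * (‖y - x‖ : ℝ)) /
            (4 * (π : ℂ) * (‖y - x‖ : ℝ))) := by
  intro lam
  have hπ : (π : ℝ) ≠ 0 := Real.pi_ne_zero
  set c : ℂ := Complex.I * (lam : ℂ) with hc
  set σ := (volume : Measure (EuclideanSpace ℝ (Fin 3))).toSphere with hσ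
  set S : ℝ → ℝ := fun t => ∫ z : Metric.sphere (0 : EuclideanSpace ℝ (Fin 3)) 1,
    f (y + t • (z : EuclideanSpace ℝ (Fin 3))) ∂σ with hSdef
  set S' : ℝ → ℝ := fun t => ∫ z : Metric.sphere (0 : EuclideanSpace ℝ (Fin 3)) 1,
    fderiv ℝ f (y + t • (z : EuclideanSpace ℝ (Fin 3))) (z : EuclideanSpace ℝ (Fin 3)) ∂σ
    with hS'def
  have hfd : Differentiable ℝ f := hf_smooth.differentiable (by simp)
  have hfc : Continuous f := hf_smooth.continuous
  have hf'c : Continuous (fderiv ℝ f) := hf_smooth.continuous_fderiv (by simp)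
  obtain ⟨C, hC⟩ := (hf_supp.fderiv (𝕜 := ℝ)).exists_bound_of_continuous hf'c
  have hC0 : 0 ≤ C := le_trans (norm_nonneg _) (hC 0)
  have hlipf : LipschitzWith (Real.nnabs C) f := by
    refine lipschitzWith_of_nnnorm_fderiv_le hfd fun x => ?_
    rw [← NNReal.coe_le_coe]
    simpa [Real.coe_nnabs, abs_of_nonneg hC0] using hC x
  have hzlip : ∀ z : Metric.sphere (0 : EuclideanSpace ℝ (Fin 3)) 1,
      LipschitzWith (Real.nnabs C)
        (fun τ : ℝ => f (y + τ • (z : EuclideanSpace ℝ (Fin 3)))) := by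
    intro z
    have hzn : ‖(z : EuclideanSpace ℝ (Fin 3))‖ = 1 := mem_sphere_zero_iff_norm.mp z.2
    have h1 : LipschitzWith 1 (fun τ : ℝ => y + τ • (z : EuclideanSpace ℝ (Fin 3))) := by
      refine LipschitzWith.of_dist_le_mul fun a b => ?_
      simp [dist_eq_norm, add_sub_add_left_eq_sub, ← sub_smul, norm_smul, hzn]
    have h2 := hlipf.comp h1
    rw [mul_one] at h2
    exact h2
  have hderiv_pt : ∀ (t : ℝ) (z : Metric.sphere (0 : EuclideanSpace ℝ (Fin 3)) 1),
      HasDerivAt (fun τ : ℝ => f (y + τ • (z : EuclideanSpace ℝ (Fin 3))))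
        (fderiv ℝ f (y + t • (z : EuclideanSpace ℝ (Fin 3)))
          (z : EuclideanSpace ℝ (Fin 3))) t := by
    intro t z
    have h1 : HasDerivAt (fun τ : ℝ => y + τ • (z : EuclideanSpace ℝ (Fin 3)))
        (z : EuclideanSpace ℝ (Fin 3)) t := by
      simpa using ((hasDerivAt_id t).smul_const (z : EuclideanSpace ℝ (Fin 3))).const_add y
    exact ((hfd _).hasFDerivAt.comp_hasDerivAt t h1)
  have hcont_z : ∀ t : ℝ, Continuous
      (fun z : Metric.sphere (0 : EuclideanSpace ℝ (Fin 3)) 1 =>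
        f (y + t • (z : EuclideanSpace ℝ (Fin 3)))) := fun t =>
    hfc.comp (continuous_const.add (continuous_subtype_val.const_smul t))
  have hcont_z' : ∀ t : ℝ, Continuous
      (fun z : Metric.sphere (0 : EuclideanSpace ℝ (Fin 3)) 1 =>
        fderiv ℝ f (y + t • (z : EuclideanSpace ℝ (Fin 3)))
          (z : EuclideanSpace ℝ (Fin 3))) := fun t =>
    (hf'c.comp (continuous_const.add (continuous_subtype_val.const_smul t))).clm_apply
      continuous_subtype_val
  have hcompsupp : ∀ g : Metric.sphere (0 : EuclideanSpace ℝ (Fin 3)) 1 → ℝ,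
      HasCompactSupport g :=
    fun g => IsCompact.of_isClosed_subset isCompact_univ (isClosed_tsupport _) (subset_univ _)
  have hS : ∀ t : ℝ, HasDerivAt S (S' t) t := by
    intro t
    have := hasDerivAt_integral_of_dominated_loc_of_lip (μ := σ)
      (F := fun (τ : ℝ) (z : Metric.sphere (0 : EuclideanSpace ℝ (Fin 3)) 1) =>
        f (y + τ • (z : EuclideanSpace ℝ (Fin 3))))
      (F' := fun z : Metric.sphere (0 : EuclideanSpace ℝ (Fin 3)) 1 =>
        fderiv ℝ f (y + t • (z : EuclideanSpace ℝ (Fin 3))) (z : EuclideanSpace ℝ (Fin 3)))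
      (x₀ := t) (bound := fun _ => C) (s := univ) Filter.univ_mem
      (Filter.Eventually.of_forall fun τ => (hcont_z τ).aestronglyMeasurable)
      ((hcont_z t).integrable_of_hasCompactSupport (hcompsupp _))
      (hcont_z' t).aestronglyMeasurable
      (Filter.Eventually.of_forall fun z => ((hzlip z).lipschitzOnWith))
      (integrable_const C)
      (Filter.Eventually.of_forall fun z => hderiv_pt t z)
    exact this.2
  have hScont : Continuous S := continuous_iff_continuousAt.mpr fun t => (hS t).continuousAt
  have hS'cont : Continuous S' := by
    refine continuous_of_dominated (bound := fun _ => C)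
      (fun t => (hcont_z' t).aestronglyMeasurable) (fun t => ?_) (integrable_const C) ?_
    · refine Filter.Eventually.of_forall fun z => ?_
      have hzn : ‖(z : EuclideanSpace ℝ (Fin 3))‖ = 1 := mem_sphere_zero_iff_norm.mp z.2
      calc ‖fderiv ℝ f (y + t • (z : EuclideanSpace ℝ (Fin 3)))
            (z : EuclideanSpace ℝ (Fin 3))‖
          ≤ ‖fderiv ℝ f (y + t • (z : EuclideanSpace ℝ (Fin 3)))‖ *
            ‖(z : EuclideanSpace ℝ (Fin 3))‖ := ContinuousLinearMap.le_opNorm _ _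
        _ = ‖fderiv ℝ f (y + t • (z : EuclideanSpace ℝ (Fin 3)))‖ := by rw [hzn, mul_one]
        _ ≤ C := hC _
    · refine Filter.Eventually.of_forall fun z => ?_
      exact (hf'c.comp (continuous_const.add (continuous_id.smul continuous_const))).clm_apply
        continuous_const
  set M : ℝ := ‖y‖ + |R| with hM
  have hM0 : 0 ≤ M := add_nonneg (norm_nonneg y) (abs_nonneg R)
  have hnot : ∀ t : ℝ, M ≤ |t| → ∀ z : Metric.sphere (0 : EuclideanSpace ℝ (Fin 3)) 1,
      y + t • (z : EuclideanSpace ℝ (Fin 3)) ∉ tsupport f := by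
    intro t ht z hmem
    have hzn : ‖(z : EuclideanSpace ℝ (Fin 3))‖ = 1 := mem_sphere_zero_iff_norm.mp z.2
    have h1 : ‖y + t • (z : EuclideanSpace ℝ (Fin 3))‖ < R :=
      mem_ball_zero_iff.mp (hf_ball hmem)
    have h2 : ‖t • (z : EuclideanSpace ℝ (Fin 3))‖ ≤
        ‖y + t • (z : EuclideanSpace ℝ (Fin 3))‖ + ‖y‖ := by
      simpa [add_sub_cancel_left] using
        norm_sub_le (y + t • (z : EuclideanSpace ℝ (Fin 3))) y
    have h3 : ‖t • (z : EuclideanSpace ℝ (Fin 3))‖ = |t| := by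
      rw [norm_smul, hzn, mul_one, Real.norm_eq_abs]
    rw [h3] at h2
    have := le_abs_self R
    rw [hM] at ht
    linarith
  have hSzero : ∀ t : ℝ, M ≤ |t| → S t = 0 := by
    intro t ht
    have h : (fun z : Metric.sphere (0 : EuclideanSpace ℝ (Fin 3)) 1 =>
        f (y + t • (z : EuclideanSpace ℝ (Fin 3)))) = fun _ => (0 : ℝ) :=
      funext fun z => image_eq_zero_of_notMem_tsupport (hnot t ht z)
    rw [hSdef]
    simp only [h, integral_const, smul_zero, smul_eq_mul, mul_zero]
  have hS'zero : ∀ t : ℝ, M ≤ |t| → S' t = 0 := by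
    intro t ht
    have h : (fun z : Metric.sphere (0 : EuclideanSpace ℝ (Fin 3)) 1 =>
        fderiv ℝ f (y + t • (z : EuclideanSpace ℝ (Fin 3)))
          (z : EuclideanSpace ℝ (Fin 3))) = fun _ => (0 : ℝ) := by
      funext z
      rw [fderiv_of_notMem_tsupport ℝ (hnot t ht z)]
      rfl
    rw [hS'def]
    simp only [h, integral_const, smul_zero, smul_eq_mul, mul_zero]
  set g : ℝ → ℝ := fun t => (4 * π)⁻¹ * (t * S t) with hgdef
  set g' : ℝ → ℝ := fun t => (4 * π)⁻¹ * (S t + t * S' t) with hg'def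
  have hgderiv : ∀ t : ℝ, HasDerivAt g (g' t) t := by
    intro t
    have h := ((hasDerivAt_id t).mul (hS t)).const_mul ((4 * π : ℝ)⁻¹)
    refine h.congr_deriv ?_
    simp only [hg'def, id_eq]
    ring
  have hkirch : ∀ t : ℝ, kirchhoff f y t = g' t := by
    intro t
    have hfun : (fun τ : ℝ => τ * sphereAvg f y τ) = g := by
      funext τ
      have hs : sphereSurfIntegral f y τ = τ ^ 2 * S τ := rfl
      have ha : sphereAvg f y τ = (4 * π * τ ^ 2)⁻¹ * (τ ^ 2 * S τ) := by
        rw [sphereAvg, hs]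
      rw [ha, hgdef]
      rcases eq_or_ne τ 0 with h | h
      · simp [h]
      · field_simp
    rw [kirchhoff, hfun]
    exact (hgderiv t).deriv
  have hexp : ∀ t : ℝ, HasDerivAt (fun τ : ℝ => Complex.exp (c * (τ : ℂ)))
      (c * Complex.exp (c * (t : ℂ))) t := by
    intro t
    have h1 : HasDerivAt (fun τ : ℝ => c * (τ : ℂ)) c t := by
      simpa using (Complex.ofRealCLM.hasDerivAt (x := t)).const_mul c
    simpa [mul_comm] using h1.cexp
  set H : ℝ → ℂ := fun t => (g t : ℂ) * Complex.exp (c * (t : ℂ)) with hH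
  have hHd : ∀ t : ℝ, HasDerivAt H
      ((g' t : ℂ) * Complex.exp (c * (t : ℂ)) +
        (g t : ℂ) * (c * Complex.exp (c * (t : ℂ)))) t := by
    intro t
    exact (hgderiv t).ofReal_comp.mul (hexp t)
  have hgzero : ∀ t : ℝ, M ≤ |t| → g t = 0 := by
    intro t ht; rw [hgdef]; simp [hSzero t ht]
  have hg'zero : ∀ t : ℝ, M ≤ |t| → g' t = 0 := by
    intro t ht; rw [hg'def]; simp [hSzero t ht, hS'zero t ht]
  have habs : ∀ x : ℝ, x ∉ Icc (-M) M → M ≤ |x| := by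
    intro x hx
    rw [mem_Icc, not_and_or, not_le, not_le] at hx
    rcases hx with h | h
    · exact le_abs.mpr (Or.inr (by linarith))
    · exact le_abs.mpr (Or.inl h.le)
  have hgc : Continuous g := continuous_const.mul (continuous_id.mul hScont)
  have hg'c : Continuous g' := continuous_const.mul (hScont.add (continuous_id.mul hS'cont))
  have hec : Continuous (fun t : ℝ => Complex.exp (c * (t : ℂ))) :=
    Complex.continuous_exp.comp (continuous_const.mul Complex.continuous_ofReal)
  have hI1 : Integrable (fun t : ℝ => (g' t : ℂ) * Complex.exp (c * (t : ℂ))) volume := by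
    refine Continuous.integrable_of_hasCompactSupport
      ((Complex.continuous_ofReal.comp hg'c).mul hec) ?_
    refine HasCompactSupport.intro (isCompact_Icc (a := -M) (b := M)) fun x hx => ?_
    simp [hg'zero x (habs x hx)]
  have hI2 : Integrable (fun t : ℝ => (g t : ℂ) * (c * Complex.exp (c * (t : ℂ)))) volume := by
    refine Continuous.integrable_of_hasCompactSupport
      ((Complex.continuous_ofReal.comp hgc).mul (continuous_const.mul hec)) ?_
    refine HasCompactSupport.intro (isCompact_Icc (a := -M) (b := M)) fun x hx => ?_
    simp [hgzero x (habs x hx)]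
  have hparts : (∫ t in Ioi (0 : ℝ),
      ((g' t : ℂ) * Complex.exp (c * (t : ℂ)) +
        (g t : ℂ) * (c * Complex.exp (c * (t : ℂ))))) = 0 - H 0 := by
    refine integral_Ioi_of_hasDerivAt_of_tendsto
      (((Complex.continuous_ofReal.comp hgc).mul hec).continuousWithinAt)
      (fun x _ => hHd x) (hI1.add hI2).integrableOn ?_
    have hev : H =ᶠ[Filter.atTop] (fun _ => (0 : ℂ)) := by
      filter_upwards [Filter.eventually_ge_atTop M] with t ht
      have : M ≤ |t| := le_trans ht (le_abs_self t)
      simp [hH, hgzero t this]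
    exact Filter.Tendsto.congr' hev.symm tendsto_const_nhds
  have hH0 : H 0 = 0 := by
    rw [hH]
    simp [hgdef]
  have hsplit : (∫ t in Ioi (0 : ℝ),
      ((g' t : ℂ) * Complex.exp (c * (t : ℂ)) +
        (g t : ℂ) * (c * Complex.exp (c * (t : ℂ)))))
      = (∫ t in Ioi (0 : ℝ), (g' t : ℂ) * Complex.exp (c * (t : ℂ)))
        + ∫ t in Ioi (0 : ℝ), (g t : ℂ) * (c * Complex.exp (c * (t : ℂ))) :=
    integral_add hI1.integrableOn hI2.integrableOn
  have hIBP : (∫ t in Ioi (0 : ℝ), (g' t : ℂ) * Complex.exp (c * (t : ℂ)))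
      = -(∫ t in Ioi (0 : ℝ), (g t : ℂ) * (c * Complex.exp (c * (t : ℂ)))) := by
    have h0 : (∫ t in Ioi (0 : ℝ), (g' t : ℂ) * Complex.exp (c * (t : ℂ)))
        + ∫ t in Ioi (0 : ℝ), (g t : ℂ) * (c * Complex.exp (c * (t : ℂ))) = 0 := by
      rw [← hsplit, hparts, hH0, sub_zero]
    linear_combination h0
  -- right-hand side
  set Φ : EuclideanSpace ℝ (Fin 3) → ℂ := fun w =>
    (f (y + w) : ℂ) * (Complex.exp (c * (‖w‖ : ℂ)) / (4 * (π : ℂ) * (‖w‖ : ℂ))) with hΦ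
  have hyns : y ∉ tsupport f := fun h =>
    absurd (mem_ball_zero_iff.mp (hf_ball h)) (not_lt.mpr hy)
  have htrans : (∫ x : EuclideanSpace ℝ (Fin 3),
      (f x : ℂ) * (Complex.exp (c * (‖y - x‖ : ℝ)) / (4 * (π : ℂ) * (‖y - x‖ : ℝ))))
      = ∫ w, Φ w := by
    rw [← integral_add_left_eq_self (μ := volume)
      (fun x : EuclideanSpace ℝ (Fin 3) =>
        (f x : ℂ) * (Complex.exp (c * (‖y - x‖ : ℝ)) / (4 * (π : ℂ) * (‖y - x‖ : ℝ)))) y]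
    refine integral_congr_ae (Filter.Eventually.of_forall fun w => ?_)
    have hw : y - (y + w) = -w := by abel
    rw [hΦ]
    simp only [hw, norm_neg]
  have hΦc : Continuous Φ := by
    rw [continuous_iff_continuousAt]
    intro w
    by_cases hw : y + w ∈ tsupport f
    · have hw0 : w ≠ 0 := by
        rintro rfl
        exact hyns (by simpa using hw)
      have hn : ‖w‖ ≠ 0 := norm_ne_zero_iff.mpr hw0
      refine ContinuousAt.mul ?_ (ContinuousAt.div ?_ ?_ ?_)
      · exact (Complex.continuous_ofReal.comp
          (hfc.comp (continuous_const.add continuous_id))).continuousAt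
      · exact (Complex.continuous_exp.comp (continuous_const.mul
          (Complex.continuous_ofReal.comp continuous_norm))).continuousAt
      · exact (continuous_const.mul
          (Complex.continuous_ofReal.comp continuous_norm)).continuousAt
      · simp only [mul_ne_zero_iff, Complex.ofReal_ne_zero]
        exact ⟨⟨by norm_num, hπ⟩, hn⟩
    · have hopen : IsOpen {v : EuclideanSpace ℝ (Fin 3) | y + v ∉ tsupport f} := by
        have : {v : EuclideanSpace ℝ (Fin 3) | y + v ∉ tsupport f}
            = (fun v : EuclideanSpace ℝ (Fin 3) => y + v) ⁻¹' (tsupport f)ᶜ := rfl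
        rw [this]
        exact (isClosed_tsupport f).isOpen_compl.preimage
          (continuous_const.add continuous_id)
      have hev : Φ =ᶠ[nhds w] (fun _ => (0 : ℂ)) := by
        filter_upwards [hopen.mem_nhds hw] with v hv
        rw [hΦ]
        simp [image_eq_zero_of_notMem_tsupport hv]
      exact hev.continuousAt
  have hΦsupp : HasCompactSupport Φ := by
    refine HasCompactSupport.intro (isCompact_closedBall (0 : EuclideanSpace ℝ (Fin 3)) M)
      fun w hw => ?_
    have hfz : f (y + w) = 0 := by
      apply image_eq_zero_of_notMem_tsupport
      intro hmem
      have h1 : ‖y + w‖ < R := mem_ball_zero_iff.mp (hf_ball hmem)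
      have h2 : ‖w‖ ≤ ‖y + w‖ + ‖y‖ := by
        simpa [add_sub_cancel_left] using norm_sub_le (y + w) y
      have h3 : ¬ ‖w‖ ≤ M := by
        simpa [Metric.mem_closedBall, dist_zero_right] using hw
      have := le_abs_self R
      rw [hM] at h3
      push_neg at h3
      linarith
    rw [hΦ]
    simp [hfz]
  have hΦint : Integrable Φ := hΦc.integrable_of_hasCompactSupport hΦsupp
  have hpolar := KirchhoffAux.polar_integral Φ hΦint
  have hstep : ∀ t ∈ Ioi (0 : ℝ),
      ((t ^ 2 : ℝ) • ∫ z : Metric.sphere (0 : EuclideanSpace ℝ (Fin 3)) 1,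
        Φ (t • (z : EuclideanSpace ℝ (Fin 3))) ∂σ)
      = (g t : ℂ) * Complex.exp (c * (t : ℂ)) := by
    intro t ht
    have ht0 : (0 : ℝ) < t := ht
    have hz : ∀ z : Metric.sphere (0 : EuclideanSpace ℝ (Fin 3)) 1,
        Φ (t • (z : EuclideanSpace ℝ (Fin 3)))
          = ((f (y + t • (z : EuclideanSpace ℝ (Fin 3))) : ℝ) : ℂ) *
            (Complex.exp (c * (t : ℂ)) / (4 * (π : ℂ) * (t : ℂ))) := by
      intro z
      have hzn : ‖(z : EuclideanSpace ℝ (Fin 3))‖ = 1 := mem_sphere_zero_iff_norm.mp z.2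
      have hnt : ‖t • (z : EuclideanSpace ℝ (Fin 3))‖ = t := by
        rw [norm_smul, hzn, mul_one, Real.norm_eq_abs, abs_of_pos ht0]
      rw [hΦ]
      simp only [hnt]
    have h1 : (t : ℂ) ≠ 0 := Complex.ofReal_ne_zero.mpr ht0.ne'
    have h2 : (π : ℂ) ≠ 0 := Complex.ofReal_ne_zero.mpr hπ
    calc ((t ^ 2 : ℝ) • ∫ z : Metric.sphere (0 : EuclideanSpace ℝ (Fin 3)) 1,
          Φ (t • (z : EuclideanSpace ℝ (Fin 3))) ∂σ)
        = (t ^ 2 : ℝ) • ((∫ z : Metric.sphere (0 : EuclideanSpace ℝ (Fin 3)) 1,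
            ((f (y + t • (z : EuclideanSpace ℝ (Fin 3))) : ℝ) : ℂ) ∂σ) *
              (Complex.exp (c * (t : ℂ)) / (4 * (π : ℂ) * (t : ℂ)))) := by
          rw [show (fun z : Metric.sphere (0 : EuclideanSpace ℝ (Fin 3)) 1 =>
            Φ (t • (z : EuclideanSpace ℝ (Fin 3)))) =
            fun z : Metric.sphere (0 : EuclideanSpace ℝ (Fin 3)) 1 =>
              ((f (y + t • (z : EuclideanSpace ℝ (Fin 3))) : ℝ) : ℂ) *
                (Complex.exp (c * (t : ℂ)) / (4 * (π : ℂ) * (t : ℂ))) from funext hz,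
            integral_mul_const]
      _ = (t ^ 2 : ℝ) • (((S t : ℝ) : ℂ) *
            (Complex.exp (c * (t : ℂ)) / (4 * (π : ℂ) * (t : ℂ)))) := by
          have hoi : (∫ z : Metric.sphere (0 : EuclideanSpace ℝ (Fin 3)) 1,
              ((f (y + t • (z : EuclideanSpace ℝ (Fin 3))) : ℝ) : ℂ) ∂σ)
              = ((S t : ℝ) : ℂ) := integral_ofReal
          rw [hoi]
      _ = (g t : ℂ) * Complex.exp (c * (t : ℂ)) := by
          rw [hgdef]
          push_cast [Complex.real_smul]
          field_simp
  have hRHS : (∫ x : EuclideanSpace ℝ (Fin 3),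
      (f x : ℂ) * (Complex.exp (c * (‖y - x‖ : ℝ)) / (4 * (π : ℂ) * (‖y - x‖ : ℝ))))
      = ∫ t in Ioi (0 : ℝ), (g t : ℂ) * Complex.exp (c * (t : ℂ)) := by
    rw [htrans, hpolar]
    exact setIntegral_congr_fun measurableSet_Ioi hstep
  calc (∫ t in Ioi (0 : ℝ), (kirchhoff f y t : ℂ) * Complex.exp (c * (t : ℂ)))
      = ∫ t in Ioi (0 : ℝ), (g' t : ℂ) * Complex.exp (c * (t : ℂ)) := by
        refine setIntegral_congr_fun measurableSet_Ioi fun t _ => ?_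
        rw [hkirch t]
    _ = -(∫ t in Ioi (0 : ℝ), (g t : ℂ) * (c * Complex.exp (c * (t : ℂ)))) := hIBP
    _ = -(c * ∫ t in Ioi (0 : ℝ), (g t : ℂ) * Complex.exp (c * (t : ℂ))) := by
        rw [show (fun t : ℝ => (g t : ℂ) * (c * Complex.exp (c * (t : ℂ))))
          = fun t : ℝ => c * ((g t : ℂ) * Complex.exp (c * (t : ℂ))) from
            funext fun t => by ring, MeasureTheory.integral_const_mul]
    _ = (-Complex.I * (lam : ℂ)) *
        ∫ x : EuclideanSpace ℝ (Fin 3),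
          (f x : ℂ) * (Complex.exp (c * (‖y - x‖ : ℝ)) /
            (4 * (π : ℂ) * (‖y - x‖ : ℝ))) := by
        rw [hRHS, hc, neg_mul, neg_mul]

end
end

section
/- For every x ∈ ℝ the series ∑_{k∈ℤ} J_k(x) e^{ikθ} converges absolutely and uniformly in θ ∈ ℝ, and its sum equals e^{i x sin θ}; that is, e^{i x sin θ} = ∑_{k=−∞}^{∞} J_k(x) e^{ikθ} (the Jacobi–Anger expansion). -/
open MeasureTheory Real Filter

noncomputable section

/-- The Bessel function of the first kind of integer order `k`, defined by
`J_k(x) = (1/(2π)) ∫_{−π}^{π} exp(i(x sin τ − k τ)) dτ` (this integral is real-valued). -/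
def besselJ (k : ℤ) (x : ℝ) : ℂ :=
  (1 / (2 * π)) * ∫ τ in (-π)..π, Complex.exp (Complex.I * (x * Real.sin τ - k * τ))

/-! The function `t ↦ e^{i x sin t}` is smooth and `2π`-periodic, and `J_k(x)` is its `k`-th
Fourier coefficient. Integrating by parts twice, with boundary terms cancelling by periodicity,
bounds `|J_k(x)|` by a multiple of `1 / k²`; so the Fourier coefficients are absolutely summable,
and a continuous periodic function with absolutely summable Fourier coefficients is the uniform
sum of its Fourier series. -/

open Complex Set Function intervalIntegral
open scoped Interval

section FourierCoeffOn

variable {a b : ℝ} (hab : a < b) {f f' f'' : ℝ → ℂ}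

theorem fourierCoeffOn_of_hasDerivAt_of_eq {n : ℤ} (hn : n ≠ 0)
    (hf : ∀ x ∈ [[a, b]], HasDerivAt f (f' x) x) (hf' : IntervalIntegrable f' volume a b)
    (hfab : f a = f b) :
    fourierCoeffOn hab f n = (b - a) / (2 * π * I * n) * fourierCoeffOn hab f' n := by
  rw [fourierCoeffOn_of_hasDerivAt hab hn hf hf', hfab, sub_self, mul_zero, zero_sub]
  have : (π : ℂ) ≠ 0 := ofReal_ne_zero.mpr pi_ne_zero
  field_simp

theorem norm_fourierCoeffOn_le {C : ℝ} (hC : ∀ x ∈ Ι a b, ‖f x‖ ≤ C) (n : ℤ) :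
    ‖fourierCoeffOn hab f n‖ ≤ C := by
  have hint : ‖∫ x in a..b, fourier (-n) (x : AddCircle (b - a)) • f x‖ ≤ C * |b - a| :=
    norm_integral_le_of_norm_le_const fun x hx => by
      rw [norm_smul, fourier_apply, Circle.norm_coe, one_mul]
      exact hC x hx
  have hba : 0 < b - a := sub_pos.mpr hab
  rw [fourierCoeffOn_eq_integral, norm_smul, norm_div, norm_one, Real.norm_of_nonneg hba.le]
  rw [abs_of_pos hba] at hint
  calc 1 / (b - a) * ‖_‖ ≤ 1 / (b - a) * (C * (b - a)) := by gcongr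
    _ = C := by field_simp

theorem norm_fourierCoeffOn_le_of_hasDerivAt_two {C : ℝ} {n : ℤ} (hn : n ≠ 0)
    (hf : ∀ x ∈ [[a, b]], HasDerivAt f (f' x) x) (hf' : ∀ x ∈ [[a, b]], HasDerivAt f' (f'' x) x)
    (hf'' : IntervalIntegrable f'' volume a b) (hfab : f a = f b) (hf'ab : f' a = f' b)
    (hC : ∀ x ∈ Ι a b, ‖f'' x‖ ≤ C) :
    ‖fourierCoeffOn hab f n‖ ≤ ((b - a) / (2 * π)) ^ 2 * C / n ^ 2 := by
  have hf'_int : IntervalIntegrable f' volume a b :=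
    ContinuousOn.intervalIntegrable fun x hx => (hf' x hx).continuousAt.continuousWithinAt
  rw [fourierCoeffOn_of_hasDerivAt_of_eq hab hn hf hf'_int hfab,
    fourierCoeffOn_of_hasDerivAt_of_eq hab hn hf' hf'' hf'ab, ← mul_assoc, norm_mul]
  have hfactor : ‖(b - a) / (2 * π * I * n) * ((b - a) / (2 * π * I * n))‖
      = ((b - a) / (2 * π)) ^ 2 / n ^ 2 := by
    have hba : 0 < b - a := sub_pos.mpr hab
    rw [← pow_two, norm_pow, norm_div, ← ofReal_sub, norm_real, Real.norm_of_nonneg hba.le]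
    simp [abs_of_pos pi_pos, div_pow, mul_pow, div_div]
  rw [hfactor]
  calc ((b - a) / (2 * π)) ^ 2 / n ^ 2 * ‖fourierCoeffOn hab f'' n‖
      ≤ ((b - a) / (2 * π)) ^ 2 / n ^ 2 * C := by
        gcongr; exact norm_fourierCoeffOn_le hab hC n
    _ = ((b - a) / (2 * π)) ^ 2 * C / n ^ 2 := by ring

theorem summable_norm_fourierCoeffOn_of_hasDerivAt_two
    (hf : ∀ x ∈ [[a, b]], HasDerivAt f (f' x) x) (hf' : ∀ x ∈ [[a, b]], HasDerivAt f' (f'' x) x)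
    (hf'' : ContinuousOn f'' [[a, b]]) (hfab : f a = f b) (hf'ab : f' a = f' b) :
    Summable fun n => ‖fourierCoeffOn hab f n‖ := by
  obtain ⟨C, hC⟩ := isCompact_uIcc.exists_bound_of_continuousOn hf''
  have hbound : Summable fun n : ℤ => ((b - a) / (2 * π)) ^ 2 * C / n ^ 2 := by
    simpa only [mul_one_div] using
      (summable_one_div_int_pow.mpr one_lt_two).mul_left (((b - a) / (2 * π)) ^ 2 * C)
  refine .of_norm_bounded_eventually hbound <| (finite_singleton 0).subset fun n hn => ?_
  by_contra hn0
  exact hn <| (norm_norm _).trans_le <| norm_fourierCoeffOn_le_of_hasDerivAt_two hab hn0 hf hf'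
    hf''.intervalIntegrable hfab hf'ab fun x hx => hC x (Ioc_subset_Icc_self hx)

end FourierCoeffOn

namespace Function.Periodic

variable {T : ℝ} [Fact (0 < T)] {f : ℝ → ℂ}

theorem fourierCoeff_lift_eq_fourierCoeffOn (hf : Periodic f T) {a b : ℝ} (hab : a < b)
    (hT : b - a = T) (n : ℤ) : fourierCoeff hf.lift n = fourierCoeffOn hab f n := by
  subst hT
  rw [fourierCoeffOn_eq_integral, fourierCoeff_eq_intervalIntegral _ _ a, add_sub_cancel]
  simp_rw [lift_coe]

theorem tendstoUniformly_fourier_series (hf : Periodic f T) (hc : Continuous f)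
    (h : Summable (fourierCoeff hf.lift)) :
    TendstoUniformly
      (fun (s : Finset ℤ) (x : ℝ) => ∑ n ∈ s, fourierCoeff hf.lift n * fourier n (x : AddCircle T))
      f atTop := by
  let F : C(AddCircle T, ℂ) := ⟨hf.lift, continuous_coinduced_dom.mpr hc⟩
  have hF := ContinuousMap.tendsto_iff_tendstoUniformly.mp
    (hasSum_fourier_series_of_summable (f := F) h)
  convert hF.comp ((↑) : ℝ → AddCircle T) using 1
  · ext s x
    simp [F]
  · ext x
    simp [F]
  · rfl

end Function.Periodic

local instance : Fact (0 < 2 * π) := ⟨two_pi_pos⟩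

section JacobiAnger

variable (x : ℝ)

def expIMulSin (t : ℝ) : ℂ := exp (I * x * Real.sin t)

theorem periodic_expIMulSin : Periodic (expIMulSin x) (2 * π) := fun t => by
  simp [expIMulSin, Real.sin_add_two_pi]

@[fun_prop]
theorem continuous_expIMulSin : Continuous (expIMulSin x) := by
  unfold expIMulSin; fun_prop

theorem hasDerivAt_expIMulSin (t : ℝ) :
    HasDerivAt (expIMulSin x) (I * x * Real.cos t * expIMulSin x t) t :=
  (((Real.hasDerivAt_sin t).ofReal_comp).const_mul (I * x)).cexp.congr_deriv (mul_comm _ _)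

theorem hasDerivAt_cos_mul_expIMulSin (t : ℝ) :
    HasDerivAt (fun t => I * x * Real.cos t * expIMulSin x t)
      ((-(I * x * Real.sin t) + (I * x * Real.cos t) ^ 2) * expIMulSin x t) t := by
  refine ((((Real.hasDerivAt_cos t).ofReal_comp).const_mul (I * x)).mul
    (hasDerivAt_expIMulSin x t)).congr_deriv ?_
  push_cast
  ring

theorem besselJ_eq_fourierCoeffOn (k : ℤ) :
    besselJ k x = fourierCoeffOn (neg_lt_self pi_pos) (expIMulSin x) k := by
  rw [fourierCoeffOn_eq_integral, besselJ, real_smul]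
  congr 1
  · push_cast; ring
  refine integral_congr fun t _ => ?_
  have : (π : ℂ) ≠ 0 := ofReal_ne_zero.mpr pi_ne_zero
  simp only [smul_eq_mul, fourier_coe_apply, expIMulSin, ← Complex.exp_add]
  congr 1
  push_cast
  field_simp
  ring

theorem summable_norm_besselJ : Summable fun k => ‖besselJ k x‖ := by
  simp_rw [besselJ_eq_fourierCoeffOn]
  refine summable_norm_fourierCoeffOn_of_hasDerivAt_two _ (fun t _ => hasDerivAt_expIMulSin x t)
    (fun t _ => hasDerivAt_cos_mul_expIMulSin x t) ?_ ?_ ?_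
  · fun_prop
  all_goals simp [expIMulSin]

theorem fourierCoeff_lift_expIMulSin :
    fourierCoeff (periodic_expIMulSin x).lift = fun k => besselJ k x := by
  ext k
  rw [besselJ_eq_fourierCoeffOn]
  exact (periodic_expIMulSin x).fourierCoeff_lift_eq_fourierCoeffOn _ (by ring) k

theorem fourier_coe_two_pi (k : ℤ) (θ : ℝ) :
    fourier k (θ : AddCircle (2 * π)) = exp (I * k * θ) := by
  have : (π : ℂ) ≠ 0 := ofReal_ne_zero.mpr pi_ne_zero
  rw [fourier_coe_apply]
  push_cast
  field_simp

end JacobiAnger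

/-- **The Jacobi–Anger expansion.**  For every `x ∈ ℝ`, the series
`∑_{k∈ℤ} J_k(x) e^{ikθ}` converges absolutely, uniformly in `θ ∈ ℝ`, and its sum
equals `e^{i x sin θ}`. -/
theorem jacobi_anger (x : ℝ) :
    Summable (fun k : ℤ => ‖besselJ k x‖) ∧
    TendstoUniformly
      (fun (s : Finset ℤ) (θ : ℝ) => ∑ k ∈ s, besselJ k x * Complex.exp (Complex.I * k * θ))
      (fun θ : ℝ => Complex.exp (Complex.I * x * Real.sin θ)) atTop ∧
    (∀ θ : ℝ, HasSum (fun k : ℤ => besselJ k x * Complex.exp (Complex.I * k * θ))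
      (Complex.exp (Complex.I * x * Real.sin θ))) := by
  have hU := (periodic_expIMulSin x).tendstoUniformly_fourier_series (continuous_expIMulSin x)
    (by rw [fourierCoeff_lift_expIMulSin]; exact (summable_norm_besselJ x).of_norm)
  simp only [fourierCoeff_lift_expIMulSin, fourier_coe_two_pi] at hU
  exact ⟨summable_norm_besselJ x, hU, fun θ => hU.tendsto_at θ⟩

end
end

section
/- Let f : ℝ² → ℂ be continuous and compactly supported. For an integer k and r ≥ 0 define the angular Fourier coefficient f_k(r) = (1/(2π)) ∫_0^{2π} f(r cos θ, r sin θ) e^{−ikθ} dθ, and define the 2D Fourier transform f̂(Λ) = (1/(2π)) ∫_{ℝ²} f(x) e^{−i x·Λ} dx. Then for every λ > 0 and every integer k, (1/(2π)) ∫_0^{2π} f̂(λ cos φ, λ sin φ) e^{−ikφ} dφ = (−i)^{|k|} ∫_0^∞ f_k(r) J_{|k|}(λ r) r dr; that is, the k-th angular Fourier coefficient of f̂ on the circle of radius λ equals (−i)^{|k|} times the order-|k| Hankel transform of f_k. -/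
/-!
In polar coordinates `x = r(cos θ, sin θ)` the phase on the circle `Λ = λ(cos φ, sin φ)` is
`⟪x, Λ⟫ = λ r cos (φ - θ)`. After exchanging the `φ`-integral with the integral over `ℝ²`
(the integrand is dominated by `|f|`), the `φ`-integral of the plane wave against `e^{-ikφ}` is
computed by shifting `φ` by `θ + π/2`, which turns `cos` into `-sin`; it equals
`2π (-i)^k J_k(λ r) e^{-ikθ}`, and what remains of the `θ`-integral is `2π f_k(r)`.
Finally `(-i)^k J_k = (-i)^{|k|} J_{|k|}` because `J_{-m} = (-1)^m J_m`.
-/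

open MeasureTheory Real Set
open scoped RealInnerProductSpace

noncomputable section

/-- The point of `ℝ²` with coordinates `(a, b)`. -/
def mk2 (a b : ℝ) : EuclideanSpace ℝ (Fin 2) :=
  EuclideanSpace.single 0 a + EuclideanSpace.single 1 b

open Complex (I)

theorem Function.Periodic.intervalIntegral_comp_add_right {E : Type*} [NormedAddCommGroup E]
    [NormedSpace ℝ E] {g : ℝ → E} {T : ℝ} (hg : Function.Periodic g T) (a c : ℝ) :
    ∫ x in a..a + T, g (x + c) = ∫ x in a..a + T, g x := by
  rw [intervalIntegral.integral_comp_add_right, add_right_comm, hg.intervalIntegral_add_eq]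

theorem Function.Periodic.intervalIntegral_zero_two_pi_eq_neg_pi_pi {E : Type*}
    [NormedAddCommGroup E] [NormedSpace ℝ E] {g : ℝ → E} (hg : Function.Periodic g (2 * π)) :
    ∫ x in (0 : ℝ)..2 * π, g x = ∫ x in -π..π, g x := by
  simpa [two_mul] using hg.intervalIntegral_add_eq 0 (-π)

theorem periodic_exp_neg_I_int_mul (k : ℤ) :
    Function.Periodic (fun θ : ℝ => Complex.exp (-I * k * θ)) (2 * π) := by
  intro θ
  dsimp only
  rw [show -I * k * ((θ + 2 * π : ℝ) : ℂ) = -I * k * θ + (-k : ℤ) * (2 * π * I) by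
      push_cast; ring,
    Complex.exp_add, Complex.exp_int_mul_two_pi_mul_I, mul_one]

theorem periodic_besselJ_integrand (k : ℤ) (x : ℝ) :
    Function.Periodic
      (fun τ : ℝ => Complex.exp (I * x * Real.sin τ) * Complex.exp (-I * k * τ)) (2 * π) :=
  (Real.sin_periodic.comp fun s => Complex.exp (I * x * s)).mul (periodic_exp_neg_I_int_mul k)

theorem two_pi_mul_besselJ (k : ℤ) (x : ℝ) :
    2 * π * besselJ k x =
      ∫ τ in -π..π, Complex.exp (I * x * Real.sin τ) * Complex.exp (-I * k * τ) := by
  rw [besselJ, ← mul_assoc, mul_one_div_cancel (by simp [Real.pi_ne_zero]), one_mul]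
  congr 1 with τ
  rw [← Complex.exp_add]
  ring_nf

theorem besselJ_neg_natCast (m : ℕ) (x : ℝ) : besselJ (-m) x = (-1) ^ m * besselJ m x := by
  refine mul_left_cancel₀ (by simp [Real.pi_ne_zero] : (2 * π : ℂ) ≠ 0) ?_
  calc (2 * π : ℂ) * besselJ (-m) x
      = ∫ τ in -π..π, Complex.exp (I * x * Real.sin (π - τ)) *
          Complex.exp (-I * ((-m : ℤ) : ℂ) * ((π - τ : ℝ) : ℂ)) := by
        rw [two_pi_mul_besselJ, intervalIntegral.integral_comp_sub_left
          (fun τ : ℝ => Complex.exp (I * x * Real.sin τ) *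
            Complex.exp (-I * ((-m : ℤ) : ℂ) * τ)), sub_neg_eq_add, ← two_mul, sub_self,
          (periodic_besselJ_integrand (-m) x).intervalIntegral_zero_two_pi_eq_neg_pi_pi]
    _ = ∫ τ in -π..π, (-1) ^ m * (Complex.exp (I * x * Real.sin τ) * Complex.exp (-I * m * τ)) := by
        congr 1 with τ
        have hphase : Complex.exp (-I * ((-m : ℤ) : ℂ) * ((π - τ : ℝ) : ℂ)) =
            (-1) ^ m * Complex.exp (-I * m * τ) := by
          rw [← Complex.exp_pi_mul_I, ← Complex.exp_nat_mul, ← Complex.exp_add]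
          push_cast
          ring_nf
        rw [Real.sin_pi_sub, hphase]
        ring
    _ = 2 * π * ((-1) ^ m * besselJ m x) := by
        rw [intervalIntegral.integral_const_mul, mul_left_comm, two_pi_mul_besselJ]
        push_cast
        rfl

theorem periodic_exp_neg_I_cos_mul_exp (k : ℤ) (z : ℝ) :
    Function.Periodic
      (fun τ : ℝ => Complex.exp (-I * z * Real.cos τ) * Complex.exp (-I * k * τ)) (2 * π) :=
  (Real.cos_periodic.comp fun s => Complex.exp (-I * z * s)).mul (periodic_exp_neg_I_int_mul k)

theorem integral_exp_neg_I_cos_mul_exp (k : ℤ) (z : ℝ) :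
    ∫ τ in -π..π, Complex.exp (-I * z * Real.cos τ) * Complex.exp (-I * k * τ) =
      2 * π * ((-I) ^ k * besselJ k z) := by
  have hshift := (periodic_exp_neg_I_cos_mul_exp k z).intervalIntegral_comp_add_right (-π) (π / 2)
  rw [neg_add_eq_sub, show 2 * π - π = π by ring] at hshift
  rw [← hshift, mul_left_comm, two_pi_mul_besselJ, ← intervalIntegral.integral_const_mul]
  congr 1 with τ
  have hquarter : Complex.exp (-I * k * (π / 2 : ℝ)) = (-I) ^ k := by
    rw [show -I * k * ((π / 2 : ℝ) : ℂ) = k * (-(π / 2 : ℝ) * I) by push_cast; ring,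
      Complex.exp_int_mul, Complex.exp_mul_I]
    simp [Complex.cos_neg, Complex.sin_neg]
  rw [Real.cos_add_pi_div_two, ← hquarter, ← Complex.exp_add, ← Complex.exp_add,
    ← Complex.exp_add]
  push_cast
  ring_nf

theorem zpow_neg_I_mul_besselJ (k : ℤ) (z : ℝ) :
    (-I) ^ k * besselJ k z = (-I) ^ k.natAbs * besselJ k.natAbs z := by
  obtain ⟨m, rfl | rfl⟩ := Int.eq_nat_or_neg k
  · simp
  · rw [besselJ_neg_natCast, zpow_neg, zpow_natCast, Int.natAbs_neg, Int.natAbs_natCast,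
      ← mul_assoc, ← inv_pow, ← mul_pow]
    simp

theorem integral_exp_neg_I_cos_sub_mul_exp (k : ℤ) (z θ : ℝ) :
    ∫ φ in (0 : ℝ)..2 * π, Complex.exp (-I * z * Real.cos (φ - θ)) * Complex.exp (-I * k * φ) =
      2 * π * (-I) ^ k.natAbs * besselJ k.natAbs z * Complex.exp (-I * k * θ) := by
  have hw := (periodic_exp_neg_I_cos_mul_exp k z).intervalIntegral_comp_add_right 0 (-θ)
  rw [zero_add, (periodic_exp_neg_I_cos_mul_exp k z).intervalIntegral_zero_two_pi_eq_neg_pi_pi,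
    integral_exp_neg_I_cos_mul_exp, zpow_neg_I_mul_besselJ] at hw
  rw [mul_assoc (2 * π : ℂ), ← hw, ← intervalIntegral.integral_mul_const]
  congr 1 with φ
  have hphase : Complex.exp (-I * k * ((φ - θ : ℝ) : ℂ)) * Complex.exp (-I * k * θ) =
      Complex.exp (-I * k * φ) := by
    rw [← Complex.exp_add]
    push_cast
    ring_nf
  rw [← sub_eq_add_neg, ← hphase]
  ring

@[fun_prop]
theorem continuous_besselJ (k : ℤ) : Continuous (besselJ k) := by
  unfold besselJ
  fun_prop

theorem norm_besselJ_le_one (k : ℤ) (x : ℝ) : ‖besselJ k x‖ ≤ 1 := by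
  have hint := intervalIntegral.norm_integral_le_of_norm_le_const (a := -π) (b := π) (C := 1)
    (f := fun τ : ℝ => Complex.exp (I * (x * Real.sin τ - k * τ))) fun τ _ => by
      simp [Complex.norm_exp]
  rw [besselJ, norm_mul]
  calc _ ≤ ‖(1 / (2 * π) : ℂ)‖ * (1 * |π - -π|) := by gcongr
    _ = 1 := by
      rw [sub_neg_eq_add, ← two_mul, abs_of_pos Real.two_pi_pos]
      simp only [one_div, norm_inv, norm_mul, Complex.norm_ofNat, Complex.norm_real,
        Real.norm_eq_abs, abs_of_pos Real.pi_pos, one_mul]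
      exact inv_mul_cancel₀ Real.two_pi_pos.ne'

theorem integral_integral_mul_swap_of_norm_le {α β 𝕜 : Type*} [MeasurableSpace α]
    [MeasurableSpace β] [RCLike 𝕜] {μ : Measure α} {ν : Measure β} [IsFiniteMeasure μ]
    [SFinite ν] {G : β → 𝕜} (hG : Integrable G ν) {h : α → β → 𝕜}
    (hh : AEStronglyMeasurable (Function.uncurry h) (μ.prod ν)) {C : ℝ}
    (hbound : ∀ x y, ‖h x y‖ ≤ C) :
    ∫ x, ∫ y, G y * h x y ∂ν ∂μ = ∫ y, G y * ∫ x, h x y ∂μ ∂ν := by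
  rw [integral_integral_swap ((hG.comp_snd μ).mul_bdd hh (ae_of_all _ fun p => hbound p.1 p.2))]
  simp only [integral_const_mul]

theorem integrableOn_polarCoord_target {E : Type*} [NormedAddCommGroup E] [NormedSpace ℝ E]
    {F : ℝ × ℝ → E} (hF : Integrable F) :
    IntegrableOn (fun p => p.1 • F (polarCoord.symm p)) polarCoord.target := by
  have hjac := (integrableOn_image_iff_integrableOn_abs_det_fderiv_smul volume
    polarCoord.open_target.measurableSet
    (fun p _ => (hasFDerivAt_polarCoord_symm p).hasFDerivWithinAt) polarCoord.symm.injOn F).mp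
    (by rw [polarCoord.symm_image_target_eq_source]; exact hF.integrableOn)
  simp_rw [det_fderivPolarCoordSymm] at hjac
  exact hjac.congr_fun (fun p hp => by simp only [abs_of_pos (mem_Ioi.mp hp.1)])
    polarCoord.open_target.measurableSet

theorem setIntegral_polarCoord_target {E : Type*} [NormedAddCommGroup E] [NormedSpace ℝ E]
    {Φ : ℝ × ℝ → E} (hΦ : IntegrableOn Φ polarCoord.target) :
    ∫ p in polarCoord.target, Φ p = ∫ r in Ioi 0, ∫ θ in -π..π, Φ (r, θ) := by
  rw [polarCoord_target, IntegrableOn, Measure.volume_eq_prod] at *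
  rw [setIntegral_prod _ hΦ]
  congr 1 with r
  rw [intervalIntegral.integral_of_le (by linarith [Real.pi_pos]), integral_Ioc_eq_integral_Ioo]

theorem integral_mul_exp_polarCoord (F : ℝ × ℝ → ℂ) (lam φ : ℝ) :
    ∫ p, F p * Complex.exp (-I * (p.1 * (lam * Real.cos φ) + p.2 * (lam * Real.sin φ))) =
      ∫ p in polarCoord.target, p.1 • F (polarCoord.symm p) *
        Complex.exp (-I * (lam * p.1 : ℝ) * Real.cos (φ - p.2)) := by
  rw [← integral_comp_polarCoord_symm]
  refine setIntegral_congr_fun polarCoord.open_target.measurableSet fun p _ => ?_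
  simp only [polarCoord_symm_apply, smul_mul_assoc, Real.cos_sub]
  push_cast
  ring_nf

theorem intervalIntegral_fourier_circle_mul_exp_eq_hankel {F : ℝ × ℝ → ℂ} (hF : Integrable F)
    (lam : ℝ) (k : ℤ) :
    ∫ φ in (0 : ℝ)..2 * π,
        (∫ p, F p * Complex.exp (-I * (p.1 * (lam * Real.cos φ) + p.2 * (lam * Real.sin φ)))) *
          Complex.exp (-I * k * φ) =
      2 * π * (-I) ^ k.natAbs * ∫ r in Ioi 0,
        (∫ θ in (0 : ℝ)..2 * π, F (r * Real.cos θ, r * Real.sin θ) * Complex.exp (-I * k * θ)) *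
          besselJ k.natAbs (lam * r) * r := by
  set G : ℝ × ℝ → ℂ := fun p => p.1 • F (polarCoord.symm p)
  have hG : IntegrableOn G polarCoord.target := integrableOn_polarCoord_target hF
  have hwave : Continuous fun q : ℝ × (ℝ × ℝ) =>
      Complex.exp (-I * (lam * q.2.1 : ℝ) * Real.cos (q.1 - q.2.2)) *
        Complex.exp (-I * k * q.1) := by
    fun_prop
  set c : ℂ := 2 * π * (-I) ^ k.natAbs
  have hbessel : IntegrableOn
      (fun p => G p * (c * besselJ k.natAbs (lam * p.1) * Complex.exp (-I * k * p.2)))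
      polarCoord.target :=
    hG.mul_bdd (by fun_prop) (c := ‖c‖) <| ae_of_all _ fun p => by
      simpa [Complex.norm_exp] using
        mul_le_mul_of_nonneg_left (norm_besselJ_le_one _ _) (norm_nonneg c)
  calc _ = ∫ φ in Ioc 0 (2 * π), ∫ p in polarCoord.target, G p *
        (Complex.exp (-I * (lam * p.1 : ℝ) * Real.cos (φ - p.2)) * Complex.exp (-I * k * φ)) := by
        simp only [intervalIntegral.integral_of_le Real.two_pi_pos.le, integral_mul_exp_polarCoord,
          ← integral_mul_const, mul_assoc, G]
    _ = ∫ p in polarCoord.target, G p * ∫ φ in Ioc 0 (2 * π),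
          Complex.exp (-I * (lam * p.1 : ℝ) * Real.cos (φ - p.2)) * Complex.exp (-I * k * φ) :=
        integral_integral_mul_swap_of_norm_le hG hwave.aestronglyMeasurable (C := 1) fun φ p => by
          -- keeping `cos (φ - θ)` real lets `simp` see that the exponents are imaginary
          simp [Complex.norm_exp, -Complex.ofReal_sub]
    _ = ∫ p in polarCoord.target, G p *
          (c * besselJ k.natAbs (lam * p.1) * Complex.exp (-I * k * p.2)) := by
        simp only [← intervalIntegral.integral_of_le Real.two_pi_pos.le,
          integral_exp_neg_I_cos_sub_mul_exp]
        rfl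
    _ = ∫ r in Ioi 0, ∫ θ in -π..π, G (r, θ) *
          (c * besselJ k.natAbs (lam * r) * Complex.exp (-I * k * θ)) :=
        setIntegral_polarCoord_target hbessel
    _ = _ := by
        rw [← integral_const_mul]
        congr 1 with r
        have hper : Function.Periodic
            (fun θ => F (r * Real.cos θ, r * Real.sin θ) * Complex.exp (-I * k * θ)) (2 * π) :=
          (show Function.Periodic (fun θ => F (r * Real.cos θ, r * Real.sin θ)) (2 * π) from
            fun θ => by simp only [Real.cos_add_two_pi, Real.sin_add_two_pi]).mul
            (periodic_exp_neg_I_int_mul k)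
        rw [hper.intervalIntegral_zero_two_pi_eq_neg_pi_pi,
          ← intervalIntegral.integral_mul_const, ← intervalIntegral.integral_mul_const,
          ← intervalIntegral.integral_const_mul]
        congr 1 with θ
        simp only [G, polarCoord_symm_apply, Complex.real_smul]
        ring

def measurableEquivMk2 : ℝ × ℝ ≃ᵐ EuclideanSpace ℝ (Fin 2) :=
  MeasurableEquiv.finTwoArrow.symm.trans (MeasurableEquiv.toLp 2 (Fin 2 → ℝ))

theorem measurableEquivMk2_apply (p : ℝ × ℝ) : measurableEquivMk2 p = mk2 p.1 p.2 := by
  ext i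
  fin_cases i <;> simp [measurableEquivMk2, mk2]

theorem measurePreserving_measurableEquivMk2 : MeasurePreserving measurableEquivMk2 :=
  (PiLp.volume_preserving_toLp (Fin 2)).comp (volume_preserving_finTwoArrow ℝ).symm

theorem integrable_comp_mk2 {E : Type*} [NormedAddCommGroup E]
    {g : EuclideanSpace ℝ (Fin 2) → E} (hg : Integrable g) :
    Integrable fun p : ℝ × ℝ => g (mk2 p.1 p.2) := by
  simpa [Function.comp_def, measurableEquivMk2_apply] using
    (measurePreserving_measurableEquivMk2.integrable_comp_emb
      measurableEquivMk2.measurableEmbedding).mpr hg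

theorem integral_comp_mk2 {E : Type*} [NormedAddCommGroup E] [NormedSpace ℝ E]
    (g : EuclideanSpace ℝ (Fin 2) → E) : ∫ p : ℝ × ℝ, g (mk2 p.1 p.2) = ∫ x, g x := by
  simpa [measurableEquivMk2_apply] using measurePreserving_measurableEquivMk2.integral_comp' g

theorem inner_mk2 (a b c d : ℝ) : ⟪mk2 a b, mk2 c d⟫ = a * c + b * d := by
  simp [mk2, inner_add_left, inner_add_right, EuclideanSpace.inner_single_left]

/-- **Angular Fourier coefficients of the 2D Fourier transform.**  For continuous,
compactly supported `f : ℝ² → ℂ`, with angular Fourier coefficients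
`f_k(r) = (1/(2π)) ∫_0^{2π} f(r cos θ, r sin θ) e^{−ikθ} dθ` and 2D Fourier transform
`f̂(Λ) = (1/(2π)) ∫_{ℝ²} f(x) e^{−i x·Λ} dx`, one has, for every `λ > 0` and `k ∈ ℤ`,
`(1/(2π)) ∫_0^{2π} f̂(λ cos φ, λ sin φ) e^{−ikφ} dφ = (−i)^{|k|} ∫_0^∞ f_k(r) J_{|k|}(λr) r dr`. -/
theorem fourier_coeff_hankel
    (f : EuclideanSpace ℝ (Fin 2) → ℂ)
    (hf_cont : Continuous f) (hf_supp : HasCompactSupport f)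
    (fk : ℤ → ℝ → ℂ)
    (hfk : ∀ (k : ℤ) (r : ℝ), 0 ≤ r →
      fk k r = (1 / (2 * (π : ℂ))) *
        ∫ θ in (0 : ℝ)..(2 * π),
          f (mk2 (r * Real.cos θ) (r * Real.sin θ)) * Complex.exp (-Complex.I * k * θ))
    (fhat : EuclideanSpace ℝ (Fin 2) → ℂ)
    (hfhat : ∀ Λ : EuclideanSpace ℝ (Fin 2),
      fhat Λ = (1 / (2 * (π : ℂ))) *
        ∫ x : EuclideanSpace ℝ (Fin 2), f x * Complex.exp (-Complex.I * (⟪x, Λ⟫ : ℝ))) :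
    ∀ (lam : ℝ), 0 < lam → ∀ (k : ℤ),
      (1 / (2 * (π : ℂ))) *
          ∫ φ in (0 : ℝ)..(2 * π),
            fhat (mk2 (lam * Real.cos φ) (lam * Real.sin φ)) *
              Complex.exp (-Complex.I * k * φ) =
        (-Complex.I) ^ (k.natAbs) *
          ∫ r in Ioi (0 : ℝ), fk k r * besselJ (k.natAbs : ℤ) (lam * r) * (r : ℂ) := by
  intro lam _ k
  have hF := integrable_comp_mk2 (hf_cont.integrable_of_hasCompactSupport hf_supp)
  have hfhat_circle : ∀ φ : ℝ, fhat (mk2 (lam * Real.cos φ) (lam * Real.sin φ)) =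
      1 / (2 * π) * ∫ p : ℝ × ℝ, f (mk2 p.1 p.2) *
        Complex.exp (-I * (p.1 * (lam * Real.cos φ) + p.2 * (lam * Real.sin φ))) := by
    intro φ
    simp [hfhat, ← integral_comp_mk2, inner_mk2]
  have hhankel : ∫ r in Ioi 0, fk k r * besselJ k.natAbs (lam * r) * r =
      1 / (2 * π) * ∫ r in Ioi 0, (∫ θ in (0 : ℝ)..2 * π,
        f (mk2 (r * Real.cos θ) (r * Real.sin θ)) * Complex.exp (-I * k * θ)) *
          besselJ k.natAbs (lam * r) * r := by
    rw [← integral_const_mul]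
    refine setIntegral_congr_fun measurableSet_Ioi fun r (hr : 0 < r) => ?_
    rw [hfk k r hr.le]
    ring
  simp_rw [hfhat_circle, mul_assoc (1 / (2 * π : ℂ)), intervalIntegral.integral_const_mul,
    intervalIntegral_fourier_circle_mul_exp_eq_hankel hF, hhankel]
  have hscalar : ∀ X : ℂ, 1 / (2 * π : ℂ) * (1 / (2 * π) * (2 * π * (-I) ^ k.natAbs * X)) =
      (-I) ^ k.natAbs * (1 / (2 * π) * X) := fun X => by
    field_simp
  exact hscalar _
end
end
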